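/- For d ≥ 2 and 1 ≤ j ≤ d−1, the polynomial B^+_{d,j}(t) satisfies B^+_{d,j}(t) = 2(d−2) t B^+_{d−1,j}(t) + 2t(1−t) d/dt B^+_{d−1,j}(t) + B_{d−1,j}(t), where B_{d,j}(t) = Σ_{σ ∈ B_d, σ_1=j} t^{des_B(σ)}. -/

import Mathlib

/-!
Removing the letter `±d` from a signed permutation `σ ∈ B_d` with `σ_1 = j` and `σ_d > 0` leaves
a signed permutation `τ ∈ B_{d-1}` with `τ_1 = j`, and `σ` is recovered from `τ` together with the
position and the sign of `±d`. Because `1 ≤ j ≤ d - 1`, the letter `±d` is never in front. If it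
is last it is `+d`, adds no descent, and `τ` is arbitrary: this gives `B_{d-1,j}`. Otherwise it
sits in one of the `d - 2` inner gaps of `τ`, so that `τ_{d-1} > 0`, and for either sign the
number of descents stays the same if the gap is a descent of `τ` and grows by one if it is an
ascent. Since `τ_1 > 0`, all `k = des_B τ` descents of `τ` are inner gaps, so `τ` contributes
`2k t^k + 2(d-2-k) t^{k+1} = 2(d-2) t t^k + 2t(1-t) (t^k)'`.
-/

/-- The signed value at position `i` of `f : Fin d → Fin d × Bool`. -/
def BVal (d : ℕ) (f : Fin d → Fin d × Bool) (i : Fin d) : ℤ :=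
  if (f i).2 then ((f i).1 : ℤ) + 1 else -(((f i).1 : ℤ) + 1)

/-- `σ_{k+1}` in one-line notation (`k` is `0`-based); `0` out of range. -/
def sval (d : ℕ) (f : Fin d → Fin d × Bool) (k : ℕ) : ℤ :=
  if h : k < d then BVal d f ⟨k, h⟩ else 0

/-- `f` encodes a signed permutation of `{1,…,d}`. -/
def IsSignedPerm (d : ℕ) (f : Fin d → Fin d × Bool) : Prop :=
  Function.Injective fun i => (f i).1

instance (d : ℕ) (f : Fin d → Fin d × Bool) : Decidable (IsSignedPerm d f) := by
  unfold IsSignedPerm; infer_instance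

/-- The type-B descent number: `|{i ∈ [0,d−1] : σ_i > σ_{i+1}}|` with `σ_0 = 0`. -/
def desB (d : ℕ) (f : Fin d → Fin d × Bool) : ℕ :=
  ((Finset.range d).filter fun i =>
    sval d f i < if i = 0 then (0 : ℤ) else sval d f (i - 1)).card

/-- Signed permutations with `σ_1 = j` and `σ_d > 0`. -/
def BplusSet (d : ℕ) (j : ℤ) : Finset (Fin d → Fin d × Bool) :=
  Finset.univ.filter fun f => IsSignedPerm d f ∧ sval d f 0 = j ∧ 0 < sval d f (d - 1)

/-- Signed permutations with `σ_1 = j` and `σ_d < 0`. -/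
def BminusSet (d : ℕ) (j : ℤ) : Finset (Fin d → Fin d × Bool) :=
  Finset.univ.filter fun f => IsSignedPerm d f ∧ sval d f 0 = j ∧ sval d f (d - 1) < 0

open Polynomial

/-- The `j`-Eulerian polynomial of type `B^+`:
`B^+_{d,j}(t) = ∑_{σ ∈ B_d, σ_1=j, σ_d>0} t^{des_B(σ)}`. -/
noncomputable def BplusPoly (d : ℕ) (j : ℤ) : Polynomial ℝ :=
  ∑ f ∈ BplusSet d j, X ^ desB d f

/-- The `j`-Eulerian polynomial of type `B^-`:
`B^−_{d,j}(t) = ∑_{σ ∈ B_d, σ_1=j, σ_d<0} t^{des_B(σ)}`. -/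
noncomputable def BminusPoly (d : ℕ) (j : ℤ) : Polynomial ℝ :=
  ∑ f ∈ BminusSet d j, X ^ desB d f

/-- The `j`-Eulerian polynomial of type `B`:
`B_{d,j}(t) = ∑_{σ ∈ B_d, σ_1=j} t^{des_B(σ)}`. -/
noncomputable def BPoly (d : ℕ) (j : ℤ) : Polynomial ℝ :=
  ∑ f ∈ Finset.univ.filter (fun f : Fin d → Fin d × Bool =>
      IsSignedPerm d f ∧ sval d f 0 = j), X ^ desB d f

open Finset

lemma lt_ite_iff_eq_true {a : ℤ} {n : ℕ} (ha : |a| ≤ n) (s : Bool) :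
    a < (if s then (n : ℤ) + 1 else -((n : ℤ) + 1)) ↔ s = true := by
  obtain ⟨h1, h2⟩ := abs_le.mp ha
  cases s
  · exact iff_of_false (show ¬a < -((n : ℤ) + 1) by omega) Bool.false_ne_true
  · exact iff_of_true (show a < (n : ℤ) + 1 by omega) rfl

lemma ite_lt_iff_eq_false {a : ℤ} {n : ℕ} (ha : |a| ≤ n) (s : Bool) :
    (if s then (n : ℤ) + 1 else -((n : ℤ) + 1)) < a ↔ s = false := by
  obtain ⟨h1, h2⟩ := abs_le.mp ha
  cases s
  · exact iff_of_true (show -((n : ℤ) + 1) < a by omega) rfl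
  · exact iff_of_false (show ¬(n : ℤ) + 1 < a by omega) Bool.true_eq_false.mp

lemma abs_sval_le {d : ℕ} (f : Fin d → Fin d × Bool) (k : ℕ) : |sval d f k| ≤ d := by
  unfold sval BVal
  split_ifs
  · rw [abs_of_nonneg (by positivity)]
    omega
  · rw [abs_neg, abs_of_nonneg (by positivity)]
    omega
  · simp

lemma sval_of_lt {d : ℕ} (f : Fin d → Fin d × Bool) {k : ℕ} (hk : k < d) :
    sval d f k = BVal d f ⟨k, hk⟩ :=
  dif_pos hk

section Insertion

variable {n : ℕ} (τ : Fin n → Fin n × Bool) (p : Fin (n + 1)) (s : Bool)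

/-- `τ` with the letter `±(n+1)`, positive iff `s`, inserted at position `p`. -/
def insertMax : Fin (n + 1) → Fin (n + 1) × Bool :=
  Fin.insertNth p (Fin.last n, s) fun i => ((τ i).1.castSucc, (τ i).2)

lemma BVal_insertMax_self :
    BVal (n + 1) (insertMax τ p s) p = if s then (n : ℤ) + 1 else -((n : ℤ) + 1) := by
  simp [BVal, insertMax]

lemma BVal_insertMax_succAbove (i : Fin n) :
    BVal (n + 1) (insertMax τ p s) (p.succAbove i) = BVal n τ i := by
  simp [BVal, insertMax]

variable {τ p s}

lemma sval_insertMax_self :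
    sval (n + 1) (insertMax τ p s) p = if s then (n : ℤ) + 1 else -((n : ℤ) + 1) :=
  (sval_of_lt _ p.isLt).trans (BVal_insertMax_self τ p s)

lemma sval_insertMax_of_lt {k : ℕ} (hk : k < p) :
    sval (n + 1) (insertMax τ p s) k = sval n τ k := by
  have hkn : k < n := by omega
  have hpos : p.succAbove ⟨k, hkn⟩ = ⟨k, by omega⟩ := Fin.succAbove_of_castSucc_lt _ _ hk
  rw [sval_of_lt _ (by omega), ← hpos, BVal_insertMax_succAbove, sval_of_lt _ hkn]

lemma sval_insertMax_succ_of_le {k : ℕ} (hk : p ≤ k) :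
    sval (n + 1) (insertMax τ p s) (k + 1) = sval n τ k := by
  by_cases hkn : k < n
  · have hpos : p.succAbove ⟨k, hkn⟩ = ⟨k + 1, by omega⟩ :=
      Fin.succAbove_of_le_castSucc _ _ hk
    rw [sval_of_lt _ (by omega), ← hpos, BVal_insertMax_succAbove, sval_of_lt _ hkn]
  · -- both positions are past the end, where `sval` is `0`
    simp [sval, hkn]

end Insertion

def IsDescentAt (d : ℕ) (f : Fin d → Fin d × Bool) (i : ℕ) : Prop :=
  sval d f i < if i = 0 then 0 else sval d f (i - 1)

instance (d : ℕ) (f : Fin d → Fin d × Bool) : DecidablePred (IsDescentAt d f) :=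
  fun _ => inferInstanceAs (Decidable (_ < _))

lemma desB_eq_card (d : ℕ) (f : Fin d → Fin d × Bool) :
    desB d f = #((range d).filter (IsDescentAt d f)) :=
  rfl

lemma desB_eq_sum (d : ℕ) (f : Fin d → Fin d × Bool) :
    desB d f = ∑ i ∈ range d, if IsDescentAt d f i then 1 else 0 :=
  card_filter _ _

lemma sum_range_add_one_add {M : Type*} [AddCommMonoid M] (g : ℕ → M) (p m : ℕ) :
    ∑ i ∈ range (p + 1 + m), g i = ∑ i ∈ range p, g i + g p + ∑ i ∈ range m, g (p + 1 + i) := by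
  rw [sum_range_add, sum_range_succ]

section Descents

variable {n : ℕ} {τ : Fin n → Fin n × Bool} {p : Fin (n + 1)} {s : Bool}

lemma isDescentAt_insertMax_of_lt {i : ℕ} (hi : i < p) :
    IsDescentAt (n + 1) (insertMax τ p s) i ↔ IsDescentAt n τ i := by
  unfold IsDescentAt
  rw [sval_insertMax_of_lt hi]
  split_ifs
  · rfl
  · rw [sval_insertMax_of_lt (by omega)]

lemma isDescentAt_insertMax_self : IsDescentAt (n + 1) (insertMax τ p s) p ↔ s = false := by
  rw [IsDescentAt, sval_insertMax_self]
  by_cases h0 : (p : ℕ) = 0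
  · rw [if_pos h0]
    exact ite_lt_iff_eq_false (by simp) s
  · rw [if_neg h0, sval_insertMax_of_lt (by omega)]
    exact ite_lt_iff_eq_false (abs_sval_le τ _) s

lemma isDescentAt_insertMax_succ : IsDescentAt (n + 1) (insertMax τ p s) (p + 1) ↔ s = true := by
  rw [IsDescentAt, if_neg (Nat.succ_ne_zero _), Nat.add_sub_cancel,
    sval_insertMax_succ_of_le le_rfl, sval_insertMax_self]
  exact lt_ite_iff_eq_true (abs_sval_le τ _) s

lemma isDescentAt_insertMax_succ_of_lt {i : ℕ} (hi : p < i) :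
    IsDescentAt (n + 1) (insertMax τ p s) (i + 1) ↔ IsDescentAt n τ i := by
  obtain ⟨i, rfl⟩ : ∃ i', i = i' + 1 := ⟨i - 1, by omega⟩
  simp only [IsDescentAt, Nat.add_sub_cancel, sval_insertMax_succ_of_le hi.le,
    sval_insertMax_succ_of_le (show (p : ℕ) ≤ i by omega), if_neg (Nat.succ_ne_zero _)]

/-- Inserting `±(n+1)` into the gap after `τ_p` keeps a descent there and turns an ascent into
a descent, whatever the sign. -/
lemma desB_insertMax (hp : (p : ℕ) < n) :
    desB (n + 1) (insertMax τ p s) = if IsDescentAt n τ p then desB n τ else desB n τ + 1 := by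
  obtain ⟨m, hm⟩ : ∃ m, n = p + 1 + m := ⟨n - (p + 1), by omega⟩
  rw [desB_eq_sum, desB_eq_sum, congrArg range (show n + 1 = p + 1 + (m + 1) by omega),
    congrArg range hm, sum_range_add_one_add, sum_range_add_one_add, sum_range_succ']
  have hbelow : ∀ i ∈ range p, IsDescentAt (n + 1) (insertMax τ p s) i ↔ IsDescentAt n τ i :=
    fun i hi => isDescentAt_insertMax_of_lt (mem_range.1 hi)
  have habove : ∀ i ∈ range m,
      IsDescentAt (n + 1) (insertMax τ p s) (p + 1 + (i + 1)) ↔ IsDescentAt n τ (p + 1 + i) :=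
    fun i _ => isDescentAt_insertMax_succ_of_lt (i := p + 1 + i) (by omega)
  rw [sum_congr rfl fun i hi => if_congr (hbelow i hi) rfl rfl,
    sum_congr rfl fun i hi => if_congr (habove i hi) rfl rfl]
  simp only [add_zero, isDescentAt_insertMax_self, isDescentAt_insertMax_succ]
  by_cases h : IsDescentAt n τ p <;> cases s <;>
    simp only [h, Bool.false_eq_true, Bool.true_eq_false, ↓reduceIte] <;> omega

lemma desB_insertMax_last : desB (n + 1) (insertMax τ (Fin.last n) true) = desB n τ := by
  have hbelow : ∀ i ∈ range n,
      IsDescentAt (n + 1) (insertMax τ (Fin.last n) true) i ↔ IsDescentAt n τ i :=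
    fun i hi => isDescentAt_insertMax_of_lt (by simpa using hi)
  rw [desB_eq_sum, desB_eq_sum, sum_range_succ,
    sum_congr rfl fun i hi => if_congr (hbelow i hi) rfl rfl]
  simpa using isDescentAt_insertMax_self (τ := τ) (p := Fin.last n) (s := true)

lemma card_filter_isDescentAt_Ioo (hn : 0 < n) (h0 : ¬IsDescentAt n τ 0) :
    #((Ioo 0 (Fin.last n)).filter fun p : Fin (n + 1) => IsDescentAt n τ p) = desB n τ := by
  have hval : ((Ioo 0 (Fin.last n)).filter fun p : Fin (n + 1) => IsDescentAt n τ p).map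
      Fin.valEmbedding = (Ioo 0 n).filter (IsDescentAt n τ) := by
    rw [show Ioo 0 n = (Ioo 0 (Fin.last n)).map Fin.valEmbedding by simp, filter_map]
    rfl
  rw [← card_map, hval, desB_eq_card, range_eq_Ico, ← Ioo_insert_left hn, filter_insert, if_neg h0]

end Descents

lemma insertMax_injective {n : ℕ} :
    Function.Injective fun x : (Fin n → Fin n × Bool) × Fin (n + 1) × Bool =>
      insertMax x.1 x.2.1 x.2.2 := by
  rintro ⟨τ, p, s⟩ ⟨τ', p', s'⟩ h
  simp only at h
  obtain rfl : p = p' := by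
    by_contra hne
    obtain ⟨i, rfl⟩ := Fin.exists_succAbove_eq hne
    have hval := congrArg (fun f => (f (p'.succAbove i)).1) h
    simp only [insertMax, Fin.insertNth_apply_same, Fin.insertNth_apply_succAbove] at hval
    exact Fin.castSucc_ne_last _ hval.symm
  obtain ⟨hs, hτ⟩ := Fin.insertNth_injective2 h
  simp only [Prod.mk.injEq, true_and] at hs
  simp only [funext_iff, Prod.mk.injEq, Fin.castSucc_inj, ← Prod.ext_iff] at hτ
  rw [hs, funext hτ]

lemma isSignedPerm_insertMax_iff {n : ℕ} {τ : Fin n → Fin n × Bool} {p : Fin (n + 1)} {s : Bool} :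
    IsSignedPerm (n + 1) (insertMax τ p s) ↔ IsSignedPerm n τ := by
  simp [IsSignedPerm, Function.Injective, p.forall_iff_succAbove, insertMax,
    eq_comm (a := Fin.last n), Fin.castSucc_ne_last]

lemma exists_insertMax_eq {n : ℕ} {f : Fin (n + 1) → Fin (n + 1) × Bool}
    (hf : IsSignedPerm (n + 1) f) : ∃ τ p s, insertMax τ p s = f := by
  obtain ⟨p, hp⟩ := Finite.injective_iff_surjective.mp hf (Fin.last n)
  have hlift : ∀ i, ∃ y : Fin n × Bool, (y.1.castSucc, y.2) = f (p.succAbove i) := fun i =>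
    ⟨((f (p.succAbove i)).1.castPred fun h => p.succAbove_ne i (hf (h.trans hp.symm)),
      (f (p.succAbove i)).2), by simp⟩
  choose τ hτ using hlift
  exact ⟨τ, p, (f p).2, Fin.insertNth_eq_iff.mpr ⟨Prod.ext hp.symm rfl, funext hτ⟩⟩

def BSet (d : ℕ) (j : ℤ) : Finset (Fin d → Fin d × Bool) :=
  univ.filter fun f => IsSignedPerm d f ∧ sval d f 0 = j

lemma BPoly_eq_sum (d : ℕ) (j : ℤ) : BPoly d j = ∑ f ∈ BSet d j, X ^ desB d f :=
  rfl

section Decomposition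

variable {n : ℕ} {j : ℤ}

/-- As `1 ≤ j ≤ n`, the letter `±(n+1)` cannot come first, and if it comes last it is positive. -/
lemma insertMax_mem_BplusSet_iff (hj : 1 ≤ j) (hjn : j ≤ n) {τ : Fin n → Fin n × Bool}
    {p : Fin (n + 1)} {s : Bool} :
    insertMax τ p s ∈ BplusSet (n + 1) j ↔
      τ ∈ BSet n j ∧ p = Fin.last n ∧ s = true ∨ τ ∈ BplusSet n j ∧ p ∈ Ioo 0 (Fin.last n) := by
  have hn : 1 ≤ n := by omega
  have hfirst : sval (n + 1) (insertMax τ p s) 0 = j ↔ p ≠ 0 ∧ sval n τ 0 = j := by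
    by_cases hp : p = 0
    · subst hp
      refine iff_of_false (fun h => ?_) fun h => h.1 rfl
      have hself := sval_insertMax_self (τ := τ) (p := 0) (s := s)
      rw [Fin.val_zero, h] at hself
      split_ifs at hself <;> omega
    · rw [sval_insertMax_of_lt (Fin.val_pos_iff.mpr ((Fin.pos_iff_ne_zero' p).mpr hp))]
      exact (and_iff_right hp).symm
  have hlast : 0 < sval (n + 1) (insertMax τ p s) n ↔
      p = Fin.last n ∧ s = true ∨ p ≠ Fin.last n ∧ 0 < sval n τ (n - 1) := by
    by_cases hp : p = Fin.last n
    · subst hp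
      have hself := sval_insertMax_self (τ := τ) (p := Fin.last n) (s := s)
      rw [Fin.val_last] at hself
      rw [hself, lt_ite_iff_eq_true (by simp) s]
      simp
    · have hpn : (p : ℕ) ≤ n - 1 := by have := Fin.val_lt_last hp; omega
      have hshift := sval_insertMax_succ_of_le (τ := τ) (s := s) hpn
      rw [Nat.sub_add_cancel hn] at hshift
      simp [hshift, hp]
  have hlast_ne_zero : p = Fin.last n → p ≠ 0 := by
    rintro rfl h
    have := congrArg Fin.val h
    simp only [Fin.val_last, Fin.val_zero] at this
    omega
  simp only [BplusSet, BSet, mem_filter, mem_univ, true_and, isSignedPerm_insertMax_iff,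
    Nat.add_sub_cancel, hfirst, hlast, mem_Ioo, Fin.pos_iff_ne_zero', Fin.lt_last_iff_ne_last]
  tauto

lemma BplusSet_succ_eq_map (hj : 1 ≤ j) (hjn : j ≤ n) :
    BplusSet (n + 1) j =
      ((BSet n j ×ˢ {(Fin.last n, true)}) ∪ (BplusSet n j ×ˢ (Ioo 0 (Fin.last n) ×ˢ univ))).map
        ⟨_, insertMax_injective⟩ := by
  ext f
  simp only [mem_map, mem_union, mem_product, mem_singleton, mem_univ, and_true,
    Function.Embedding.coeFn_mk, Prod.ext_iff]
  constructor
  · intro hf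
    obtain ⟨τ, p, s, rfl⟩ := exists_insertMax_eq (mem_filter.1 hf).2.1
    exact ⟨(τ, p, s), (insertMax_mem_BplusSet_iff hj hjn).1 hf, rfl⟩
  · rintro ⟨⟨τ, p, s⟩, hx, rfl⟩
    exact (insertMax_mem_BplusSet_iff hj hjn).2 hx

lemma BplusPoly_succ_eq_sum (hj : 1 ≤ j) (hjn : j ≤ n) :
    BplusPoly (n + 1) j = BPoly n j +
      ∑ τ ∈ BplusSet n j, ∑ p ∈ Ioo 0 (Fin.last n), ∑ s : Bool,
        (X : ℝ[X]) ^ desB (n + 1) (insertMax τ p s) := by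
  have hdisj : Disjoint (BSet n j ×ˢ {(Fin.last n, true)})
      (BplusSet n j ×ˢ (Ioo 0 (Fin.last n) ×ˢ (univ : Finset Bool))) := by
    simp [disjoint_left]
  rw [BplusPoly, BplusSet_succ_eq_map hj hjn, sum_map, sum_union hdisj, sum_product, sum_product,
    BPoly_eq_sum]
  simp only [sum_singleton, Function.Embedding.coeFn_mk, desB_insertMax_last, sum_product]

end Decomposition

lemma X_mul_derivative_X_pow {R : Type*} [CommSemiring R] (k : ℕ) :
    X * derivative (X ^ k : R[X]) = (k : R[X]) * X ^ k := by
  rcases k with _ | k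
  · simp
  · rw [derivative_X_pow, C_eq_natCast, Nat.add_sub_cancel]
    ring

lemma sum_insertMax_interior {n : ℕ} {τ : Fin n → Fin n × Bool} (hτ : 0 < sval n τ 0) :
    ∑ p ∈ Ioo 0 (Fin.last n), ∑ s : Bool, (X : ℝ[X]) ^ desB (n + 1) (insertMax τ p s) =
      C (2 * ((n : ℝ) - 1)) * X * X ^ desB n τ + 2 * X * (1 - X) * derivative (X ^ desB n τ) := by
  have hn : 0 < n := Nat.pos_of_ne_zero fun h => by subst h; simp [sval] at hτ
  have h0 : ¬IsDescentAt n τ 0 := by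
    rw [IsDescentAt, if_pos rfl, not_lt]
    exact hτ.le
  have hcard : #(Ioo 0 (Fin.last n)) = n - 1 := by simp
  have hC : C (2 * ((n : ℝ) - 1)) = 2 * ((n : ℝ[X]) - 1) := by
    rw [map_mul, map_sub, map_one, map_natCast, map_ofNat]
  set k := desB n τ
  calc _ = ∑ p ∈ Ioo 0 (Fin.last n),
        (2 * X ^ (k + 1) + if IsDescentAt n τ p then 2 * (X ^ k - X ^ (k + 1)) else 0) := by
        refine sum_congr rfl fun p hp => ?_
        simp only [Fintype.sum_bool, desB_insertMax (Fin.val_lt_last (mem_Ioo.1 hp).2.ne)]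
        split_ifs <;> ring
    _ = (n - 1 : ℕ) • (2 * X ^ (k + 1)) + k • (2 * (X ^ k - X ^ (k + 1))) := by
        rw [sum_add_distrib, sum_const, hcard, ← sum_filter, sum_const,
          card_filter_isDescentAt_Ioo hn h0]
    _ = _ := by
        rw [nsmul_eq_mul, nsmul_eq_mul, Nat.cast_sub hn, Nat.cast_one, hC]
        linear_combination 2 * (X - 1) * X_mul_derivative_X_pow (R := ℝ) k

lemma BplusPoly_succ (n : ℕ) {j : ℤ} (hj : 1 ≤ j) (hjn : j ≤ n) :
    BplusPoly (n + 1) j = C (2 * ((n : ℝ) - 1)) * X * BplusPoly n j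
      + 2 * X * (1 - X) * derivative (BplusPoly n j) + BPoly n j := by
  have hpos : ∀ τ ∈ BplusSet n j, 0 < sval n τ 0 := fun τ hτ => by
    simp only [BplusSet, mem_filter] at hτ
    omega
  rw [BplusPoly_succ_eq_sum hj hjn, sum_congr rfl fun τ hτ => sum_insertMax_interior (hpos τ hτ),
    sum_add_distrib, ← mul_sum, ← mul_sum, BplusPoly, ← map_sum derivative]
  ring

theorem BplusPoly_diff_recurrence_general (d : ℕ) (j : ℤ) (hj : 1 ≤ j)
    (hjd : j ≤ (d : ℤ) - 1) :
    BplusPoly d j =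
      C (2 * ((d : ℝ) - 2)) * X * BplusPoly (d - 1) j
      + 2 * X * (1 - X) * derivative (BplusPoly (d - 1) j)
      + BPoly (d - 1) j := by
  obtain ⟨n, rfl⟩ : ∃ n, d = n + 1 := ⟨d - 1, by omega⟩
  have hcoeff : ((n + 1 : ℕ) : ℝ) - 2 = n - 1 := by
    push_cast
    ring
  rw [Nat.add_sub_cancel, hcoeff]
  exact BplusPoly_succ n hj (by omega)

/-- for `d ≥ 2` and `1 ≤ j ≤ d−1`,
`B^+_{d,j}(t) = 2(d−2) t B^+_{d−1,j}(t) + 2t(1−t) (B^+_{d−1,j})'(t) + B_{d−1,j}(t)`. -/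
theorem BplusPoly_diff_recurrence (d : ℕ) (j : ℤ) (hd : 2 ≤ d) (hj : 1 ≤ j)
    (hjd : j ≤ (d : ℤ) - 1) :
    BplusPoly d j =
      C (2 * ((d : ℝ) - 2)) * X * BplusPoly (d - 1) j
      + 2 * X * (1 - X) * derivative (BplusPoly (d - 1) j)
      + BPoly (d - 1) j :=
  BplusPoly_diff_recurrence_general d j hj hjd
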